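/- arXiv:1504.06504 — 3 statements merged into one kernel-verified Lean document; each statement's English description precedes it below -/
import Mathlib

section
/- Let {Λ_i}_{i∈I} be a g-frame for a finite-dimensional Hilbert space H with g-frame operator S. For every Parseval g-frame {Γ_i}, one has ∑_i ‖Λ_i − Γ_i‖_F² ≥ ∑_i ‖Λ_i − Λ_i S^{-1/2}‖_F², with equality if and only if Γ_i = Λ_i S^{-1/2} for all i. -/
/-!
Put `Θ i = Λ i S^{-1/2}` and `Q = S^{1/4}`, so that `Λ i = Θ i Q²` and `Θ` is a Parseval g-frame.
Expanding Hilbert–Schmidt norms, and moving one factor `Q` to the other side of the trace in the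
cross term `tr (Γ i† Θ i Q²) = tr ((Γ i Q)† (Θ i Q))`, gives for every Parseval g-frame `Γ`
  `∑ ‖Λ i - Γ i‖² = ∑ ‖Λ i - Θ i‖² + ∑ ‖(Θ i - Γ i) Q‖²`,
because both `∑ ‖Θ i Q‖²` and `∑ ‖Γ i Q‖²` equal `‖Q‖²`. The last sum vanishes only if `Γ = Θ`,
since `Q` is invertible.
-/

/-- The Hilbert–Schmidt norm squared `‖T‖_F²` of an operator on a finite-dimensional
Hilbert space. -/
noncomputable def hsNormSq {H K : Type*} [NormedAddCommGroup H] [InnerProductSpace ℂ H]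
    [FiniteDimensional ℂ H] [NormedAddCommGroup K] [InnerProductSpace ℂ K]
    (T : H →L[ℂ] K) : ℝ :=
  ∑ k, ‖T (stdOrthonormalBasis ℂ H k)‖ ^ 2

open scoped InnerProductSpace

lemma ContinuousLinearMap.comp_eq_zero_iff_of_mul_eq_one {𝕜 E F : Type*}
    [NontriviallyNormedField 𝕜] [NormedAddCommGroup E] [NormedSpace 𝕜 E] [NormedAddCommGroup F]
    [NormedSpace 𝕜 F] {T : E →L[𝕜] F} {Q Q' : E →L[𝕜] E}
    (hQ : Q * Q' = 1) : T ∘L Q = 0 ↔ T = 0 := by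
  refine ⟨fun h => ?_, fun h => by rw [h, zero_comp]⟩
  have h' := congrArg (· ∘L Q') h
  rwa [comp_assoc, ← mul_def, hQ, one_def, comp_id, zero_comp] at h'

section HilbertSchmidt

variable {H K : Type*} [NormedAddCommGroup H] [InnerProductSpace ℂ H] [FiniteDimensional ℂ H]
  [NormedAddCommGroup K] [InnerProductSpace ℂ K]

noncomputable def hsInner (T U : H →L[ℂ] K) : ℂ :=
  ∑ k, ⟪T (stdOrthonormalBasis ℂ H k), U (stdOrthonormalBasis ℂ H k)⟫_ℂ

lemma hsNormSq_nonneg (T : H →L[ℂ] K) : 0 ≤ hsNormSq T :=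
  Finset.sum_nonneg fun _ _ => sq_nonneg _

lemma hsNormSq_eq_zero_iff {T : H →L[ℂ] K} : hsNormSq T = 0 ↔ T = 0 := by
  refine ⟨fun h => ?_, by rintro rfl; simp [hsNormSq]⟩
  have h0 := (Finset.sum_eq_zero_iff_of_nonneg fun k _ => sq_nonneg _).mp h
  apply ContinuousLinearMap.coe_injective
  refine (stdOrthonormalBasis ℂ H).toBasis.ext fun k => ?_
  simpa using h0 k (Finset.mem_univ k)

lemma hsInner_self (T : H →L[ℂ] K) : hsInner T T = hsNormSq T := by
  simp [hsInner, hsNormSq, inner_self_eq_norm_sq_to_K]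

lemma hsNormSq_sub (T U : H →L[ℂ] K) :
    hsNormSq (T - U) = hsNormSq T + hsNormSq U - 2 * (hsInner T U).re := by
  simp only [hsNormSq, hsInner, sub_apply, Complex.re_sum, Finset.mul_sum,
    ← Finset.sum_add_distrib, ← Finset.sum_sub_distrib]
  refine Finset.sum_congr rfl fun k _ => ?_
  rw [norm_sub_sq (𝕜 := ℂ), RCLike.re_to_complex]
  ring

lemma norm_hsInner_le (T U : H →L[ℂ] K) : ‖hsInner T U‖ ≤ hsNormSq T + hsNormSq U := by
  set e := stdOrthonormalBasis ℂ H
  calc ‖hsInner T U‖ ≤ ∑ k, ‖⟪T (e k), U (e k)⟫_ℂ‖ := norm_sum_le _ _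
    _ ≤ ∑ k, (‖T (e k)‖ ^ 2 + ‖U (e k)‖ ^ 2) := by
      gcongr with k
      nlinarith [norm_inner_le_norm (𝕜 := ℂ) (T (e k)) (U (e k)),
        sq_nonneg (‖T (e k)‖ - ‖U (e k)‖)]
    _ = hsNormSq T + hsNormSq U := Finset.sum_add_distrib

lemma hsInner_eq_trace [CompleteSpace K] (T U : H →L[ℂ] K) :
    hsInner T U = LinearMap.trace ℂ H (T.adjoint ∘L U : H →L[ℂ] H) := by
  simp [LinearMap.trace_eq_sum_inner _ (stdOrthonormalBasis ℂ H), hsInner,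
    ContinuousLinearMap.adjoint_inner_right]

lemma hsInner_comp_mul_self [CompleteSpace K] {Q : H →L[ℂ] H} (hQ : IsSelfAdjoint Q)
    (T U : H →L[ℂ] K) : hsInner (T ∘L (Q * Q)) U = hsInner (T ∘L Q) (U ∘L Q) := by
  simp only [hsInner_eq_trace, ContinuousLinearMap.adjoint_comp, ContinuousLinearMap.mul_def,
    hQ.adjoint_eq]
  change LinearMap.trace ℂ H ↑(Q * (Q ∘L T.adjoint ∘L U))
    = LinearMap.trace ℂ H ↑((Q ∘L T.adjoint ∘L U) * Q)
  rw [ContinuousLinearMap.toLinearMap_mul, ContinuousLinearMap.toLinearMap_mul,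
    LinearMap.trace_mul_comm]

end HilbertSchmidt

section ParsevalFamily

variable {H K I : Type*} [NormedAddCommGroup H] [InnerProductSpace ℂ H] [FiniteDimensional ℂ H]
  [NormedAddCommGroup K] [InnerProductSpace ℂ K] {Φ Ψ : I → (H →L[ℂ] K)}

lemma hasSum_hsNormSq_comp (hΦ : ∀ x, HasSum (fun i => ‖Φ i x‖ ^ 2) (‖x‖ ^ 2))
    (T : H →L[ℂ] H) :
    HasSum (fun i => hsNormSq (Φ i ∘L T)) (hsNormSq T) :=
  hasSum_sum fun k _ => hΦ (T (stdOrthonormalBasis ℂ H k))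

lemma Summable.hsInner (hΦ : Summable fun i => hsNormSq (Φ i))
    (hΨ : Summable fun i => hsNormSq (Ψ i)) : Summable fun i => hsInner (Φ i) (Ψ i) :=
  Summable.of_norm_bounded (hΦ.add hΨ) fun i => norm_hsInner_le (Φ i) (Ψ i)

lemma HasSum.hsNormSq_sub {a b : ℝ} (hΦ : HasSum (fun i => hsNormSq (Φ i)) a)
    (hΨ : HasSum (fun i => hsNormSq (Ψ i)) b) :
    HasSum (fun i => hsNormSq (Φ i - Ψ i)) (a + b - 2 * (∑' i, hsInner (Φ i) (Ψ i)).re) := by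
  have hc := Complex.hasSum_re (hΦ.summable.hsInner hΨ.summable).hasSum
  simpa only [_root_.hsNormSq_sub] using (hΦ.add hΨ).sub (hc.mul_left 2)

theorem hasSum_hsNormSq_sub_comp [CompleteSpace K] {Θ Γ : I → (H →L[ℂ] K)}
    (hΘ : ∀ x, HasSum (fun i => ‖Θ i x‖ ^ 2) (‖x‖ ^ 2))
    (hΓ : ∀ x, HasSum (fun i => ‖Γ i x‖ ^ 2) (‖x‖ ^ 2))
    {Q : H →L[ℂ] H} (hQ : IsSelfAdjoint Q) :
    HasSum (fun i => hsNormSq ((Θ i - Γ i) ∘L Q))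
      (∑' i, hsNormSq (Θ i ∘L (Q * Q) - Γ i) - ∑' i, hsNormSq (Θ i ∘L (Q * Q) - Θ i)) := by
  have hΘQ := hasSum_hsNormSq_comp hΘ Q
  have hΘQQ := hasSum_hsNormSq_comp hΘ (Q * Q)
  have hΘ1 : HasSum (fun i => hsNormSq (Θ i)) (hsNormSq (1 : H →L[ℂ] H)) :=
    hasSum_hsNormSq_comp hΘ 1
  have hΓ1 : HasSum (fun i => hsNormSq (Γ i)) (hsNormSq (1 : H →L[ℂ] H)) :=
    hasSum_hsNormSq_comp hΓ 1
  have hΘΘ : ∑' i, hsInner (Θ i ∘L Q) (Θ i ∘L Q) = hsNormSq Q := by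
    simp only [hsInner_self, ← Complex.ofReal_tsum, hΘQ.tsum_eq]
  have hΘΓ := (hΘQQ.hsNormSq_sub hΓ1).tsum_eq
  have hΘΘ' := (hΘQQ.hsNormSq_sub hΘ1).tsum_eq
  simp only [hsInner_comp_mul_self hQ, hΘΘ, Complex.ofReal_re] at hΘΓ hΘΘ'
  simp only [ContinuousLinearMap.sub_comp]
  convert hΘQ.hsNormSq_sub (hasSum_hsNormSq_comp hΓ Q) using 1
  rw [hΘΓ, hΘΘ']
  ring

end ParsevalFamily

section RealPower

variable {A : Type*} {p : A → Prop} [Ring A] [StarRing A] [TopologicalSpace A] [Algebra ℝ A]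
  [ContinuousFunctionalCalculus ℝ A p] {a : A}

lemma cfc_rpow_mul_cfc_rpow (ha : ∀ t ∈ spectrum ℝ a, 0 < t) (r s : ℝ) :
    cfc (fun t : ℝ => t ^ r) a * cfc (fun t : ℝ => t ^ s) a =
      cfc (fun t : ℝ => t ^ (r + s)) a := by
  have hcont : ∀ u : ℝ, ContinuousOn (fun t : ℝ => t ^ u) (spectrum ℝ a) := fun u =>
    continuousOn_id.rpow_const fun t ht => Or.inl (ha t ht).ne'
  rw [← cfc_mul _ _ a (hcont r) (hcont s)]
  exact cfc_congr fun t ht => (Real.rpow_add (ha t ht) r s).symm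

lemma cfc_rpow_one (ha : p a) : cfc (fun t : ℝ => t ^ (1 : ℝ)) a = a := by
  simpa only [Real.rpow_one] using cfc_id' ℝ a

lemma cfc_rpow_zero (ha : p a) : cfc (fun t : ℝ => t ^ (0 : ℝ)) a = 1 := by
  simpa only [Real.rpow_zero] using cfc_const_one ℝ a

end RealPower

section GFrame

variable {H K I : Type*} [NormedAddCommGroup H] [InnerProductSpace ℂ H] [CompleteSpace H]
  [NormedAddCommGroup K] [InnerProductSpace ℂ K] [CompleteSpace K]
  {Λ : I → (H →L[ℂ] K)} {S : H →L[ℂ] H}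

lemma hasSum_inner_apply_of_hasSum_adjoint
    (hS : ∀ x, HasSum (fun i => (Λ i).adjoint (Λ i x)) (S x)) (x y : H) :
    HasSum (fun i => ⟪Λ i x, Λ i y⟫_ℂ) ⟪x, S y⟫_ℂ := by
  simpa only [innerSL_apply_apply, ContinuousLinearMap.adjoint_inner_right] using
    (hS y).mapL (innerSL ℂ x)

lemma hasSum_norm_sq_of_hasSum_adjoint
    (hS : ∀ x, HasSum (fun i => (Λ i).adjoint (Λ i x)) (S x)) (x : H) :
    HasSum (fun i => ‖Λ i x‖ ^ 2) (⟪x, S x⟫_ℂ).re := by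
  simpa only [← RCLike.re_to_complex, inner_self_eq_norm_sq] using
    Complex.hasSum_re (hasSum_inner_apply_of_hasSum_adjoint hS x x)

lemma isSelfAdjoint_of_hasSum_adjoint
    (hS : ∀ x, HasSum (fun i => (Λ i).adjoint (Λ i x)) (S x)) : IsSelfAdjoint S := by
  rw [ContinuousLinearMap.isSelfAdjoint_iff_isSymmetric]
  intro x y
  have h := (hasSum_inner_apply_of_hasSum_adjoint hS y x).map (starRingEnd ℂ)
    Complex.continuous_conj
  simp only [Function.comp_def, inner_conj_symm] at h
  exact h.unique (hasSum_inner_apply_of_hasSum_adjoint hS x y)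

lemma algebraMap_le_of_hasSum_adjoint
    (hS : ∀ x, HasSum (fun i => (Λ i).adjoint (Λ i x)) (S x)) {A : ℝ}
    (hlow : ∀ x, A * ‖x‖ ^ 2 ≤ ∑' i, ‖Λ i x‖ ^ 2) : algebraMap ℝ (H →L[ℂ] H) A ≤ S := by
  rw [ContinuousLinearMap.le_def, ContinuousLinearMap.isPositive_def']
  refine ⟨(isSelfAdjoint_of_hasSum_adjoint hS).sub (.algebraMap _ (.all A)), fun x => ?_⟩
  have h := (hasSum_norm_sq_of_hasSum_adjoint hS x).tsum_eq ▸ hlow x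
  rw [ContinuousLinearMap.reApplyInnerSelf, sub_apply, inner_sub_left,
    map_sub, inner_re_symm, Algebra.algebraMap_eq_smul_one, smul_apply, one_apply_eq_self,
    RCLike.real_smul_eq_coe_smul (K := ℂ), inner_smul_left, inner_self_eq_norm_sq_to_K]
  simp only [RCLike.conj_ofReal, ← RCLike.ofReal_pow, ← RCLike.ofReal_mul, RCLike.ofReal_re,
    RCLike.re_to_complex]
  linarith

lemma hasSum_norm_sq_comp_cfc_rpow_neg_half
    (hS : ∀ x, HasSum (fun i => (Λ i).adjoint (Λ i x)) (S x))
    (hpos : ∀ t ∈ spectrum ℝ S, 0 < t) (x : H) :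
    HasSum (fun i => ‖(Λ i ∘L cfc (fun t : ℝ => t ^ (-(1/2 : ℝ))) S) x‖ ^ 2) (‖x‖ ^ 2) := by
  set R := cfc (fun t : ℝ => t ^ (-(1/2 : ℝ))) S
  have hSA := isSelfAdjoint_of_hasSum_adjoint hS
  have hRSR : R * S * R = 1 := by
    conv_lhs => enter [1, 2]; rw [← cfc_rpow_one hSA]
    rw [cfc_rpow_mul_cfc_rpow hpos, cfc_rpow_mul_cfc_rpow hpos,
      show -(1/2 : ℝ) + 1 + -(1/2) = 0 by norm_num, cfc_rpow_zero hSA]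
  have hR : IsSelfAdjoint R := cfc_predicate _ S
  have hRx : (⟪R x, S (R x)⟫_ℂ).re = ‖x‖ ^ 2 := by
    rw [show ⟪R x, S (R x)⟫_ℂ = ⟪x, R (S (R x))⟫_ℂ from hR.isSymmetric _ _,
      ← mul_apply_eq_comp, ← mul_apply_eq_comp, hRSR,
      one_apply_eq_self, ← RCLike.re_to_complex, inner_self_eq_norm_sq]
  simpa only [hRx, ContinuousLinearMap.comp_apply] using
    hasSum_norm_sq_of_hasSum_adjoint hS (R x)

end GFrame

theorem gframe_parseval_best_approx_general
    {H K : Type*} [NormedAddCommGroup H] [InnerProductSpace ℂ H] [FiniteDimensional ℂ H]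
    [NormedAddCommGroup K] [InnerProductSpace ℂ K] [CompleteSpace K]
    {I : Type*} (Λ : I → (H →L[ℂ] K)) (S : H →L[ℂ] H)
    (A : ℝ) (hA : 0 < A)
    (hlow : ∀ x : H, A * ‖x‖ ^ 2 ≤ ∑' i, ‖Λ i x‖ ^ 2)
    (hS : ∀ x : H, HasSum (fun i => (Λ i).adjoint (Λ i x)) (S x))
    (Γ : I → (H →L[ℂ] K))
    (hΓ : ∀ x : H, HasSum (fun i => ‖Γ i x‖ ^ 2) (‖x‖ ^ 2)) :
    (∑' i, hsNormSq (Λ i - (Λ i) ∘L cfc (fun t : ℝ => t ^ (-(1/2 : ℝ))) S))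
      ≤ ∑' i, hsNormSq (Λ i - Γ i) ∧
    ((∑' i, hsNormSq (Λ i - Γ i)
        = ∑' i, hsNormSq (Λ i - (Λ i) ∘L cfc (fun t : ℝ => t ^ (-(1/2 : ℝ))) S))
      ↔ ∀ i, Γ i = (Λ i) ∘L cfc (fun t : ℝ => t ^ (-(1/2 : ℝ))) S) := by
  set R := cfc (fun t : ℝ => t ^ (-(1/2 : ℝ))) S
  set Q := cfc (fun t : ℝ => t ^ (1/4 : ℝ)) S
  have hSA := isSelfAdjoint_of_hasSum_adjoint hS
  have hpos : ∀ t ∈ spectrum ℝ S, 0 < t := fun t ht => hA.trans_le <|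
    (algebraMap_le_iff_le_spectrum hSA).mp (algebraMap_le_of_hasSum_adjoint hS hlow) t ht
  have hRQQ : R * (Q * Q) = 1 := by
    rw [cfc_rpow_mul_cfc_rpow hpos, cfc_rpow_mul_cfc_rpow hpos,
      show -(1/2 : ℝ) + (1/4 + 1/4) = 0 by norm_num, cfc_rpow_zero hSA]
  have hQinv : Q * cfc (fun t : ℝ => t ^ (-(1/4 : ℝ))) S = 1 := by
    rw [cfc_rpow_mul_cfc_rpow hpos, add_neg_cancel, cfc_rpow_zero hSA]
  have hΛ : ∀ i, (Λ i ∘L R) ∘L (Q * Q) = Λ i := fun i => by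
    rw [ContinuousLinearMap.comp_assoc, ← ContinuousLinearMap.mul_def, hRQQ,
      ContinuousLinearMap.one_def, ContinuousLinearMap.comp_id]
  have hD := hasSum_hsNormSq_sub_comp (Θ := fun i => Λ i ∘L R) (Q := Q)
    (hasSum_norm_sq_comp_cfc_rpow_neg_half hS hpos) hΓ (cfc_predicate _ S)
  simp only [hΛ] at hD
  refine ⟨sub_nonneg.mp (hD.nonneg fun i => hsNormSq_nonneg _), ?_⟩
  calc _ ↔ HasSum (fun i => hsNormSq ((Λ i ∘L R - Γ i) ∘L Q)) 0 := by
        rw [← sub_eq_zero]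
        exact ⟨fun h => h ▸ hD, hD.unique⟩
    _ ↔ ∀ i, Γ i = Λ i ∘L R := by
        rw [hasSum_zero_iff_of_nonneg fun i => hsNormSq_nonneg _, funext_iff]
        refine forall_congr' fun i => ?_
        rw [Pi.zero_apply, hsNormSq_eq_zero_iff,
          ContinuousLinearMap.comp_eq_zero_iff_of_mul_eq_one hQinv, sub_eq_zero, eq_comm]

/-- For a g-frame `{Λ i}` with frame operator `S` and any Parseval g-frame `{Γ i}`:
`∑ i ‖Λ i − Γ i‖_F² ≥ ∑ i ‖Λ i − Λ i S^{-1/2}‖_F²`, with equality iff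
`Γ i = Λ i S^{-1/2}` for all `i`. -/
theorem gframe_parseval_best_approx
    {H K : Type*} [NormedAddCommGroup H] [InnerProductSpace ℂ H] [FiniteDimensional ℂ H]
    [NormedAddCommGroup K] [InnerProductSpace ℂ K] [CompleteSpace K]
    {I : Type*} (Λ : I → (H →L[ℂ] K)) (S : H →L[ℂ] H)
    (A B : ℝ) (hA : 0 < A) (hB : 0 < B)
    (hsum : ∀ x : H, Summable fun i => ‖Λ i x‖ ^ 2)
    (hlow : ∀ x : H, A * ‖x‖ ^ 2 ≤ ∑' i, ‖Λ i x‖ ^ 2)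
    (hup : ∀ x : H, ∑' i, ‖Λ i x‖ ^ 2 ≤ B * ‖x‖ ^ 2)
    (hS : ∀ x : H, HasSum (fun i => (Λ i).adjoint (Λ i x)) (S x))
    (Γ : I → (H →L[ℂ] K))
    (hΓ : ∀ x : H, HasSum (fun i => ‖Γ i x‖ ^ 2) (‖x‖ ^ 2)) :
    (∑' i, hsNormSq (Λ i - (Λ i) ∘L cfc (fun t : ℝ => t ^ (-(1/2 : ℝ))) S))
      ≤ ∑' i, hsNormSq (Λ i - Γ i) ∧
    ((∑' i, hsNormSq (Λ i - Γ i)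
        = ∑' i, hsNormSq (Λ i - (Λ i) ∘L cfc (fun t : ℝ => t ^ (-(1/2 : ℝ))) S))
      ↔ ∀ i, Γ i = (Λ i) ∘L cfc (fun t : ℝ => t ^ (-(1/2 : ℝ))) S) :=
  gframe_parseval_best_approx_general Λ S A hA hlow hS Γ hΓ
end

section
/- Let 0 ≤ ε < 1 and let {Λ_i}_{i∈I} be an ε-nearly Parseval g-frame for an n-dimensional Hilbert space H, with g-frame operator S. Then ∑_i ‖Λ_i − Λ_i S^{-1/2}‖_F² ≤ n(1 − √(1−ε))². -/
/-!
With `E = 1 - S^{-1/2}` one has `Λ i - Λ i S^{-1/2} = Λ i E`, and the frame identity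
`∑ i, ‖Λ i y‖² = re ⟪S y, y⟫` turns `∑ i, ‖Λ i (E x)‖²` into `re ⟪(E S E) x, x⟫`. By functional
calculus `E S E = (S^{1/2} - 1)²`, so this equals `‖(S^{1/2} - 1) x‖²`. The frame bounds put the
spectrum of `S` in `[1 - ε, 1 + ε]`, on which `|√t - 1| ≤ 1 - √(1 - ε)` by concavity of `√`;
summing over an orthonormal basis of `H` gives `n (1 - √(1 - ε))²`.
-/

open scoped InnerProductSpace

open ContinuousLinearMap RCLike

lemma abs_sqrt_sub_one_le {ε t : ℝ} (hε : ε ≤ 1) (ht : t ∈ Set.Icc (1 - ε) (1 + ε)) :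
    |√t - 1| ≤ 1 - √(1 - ε) := by
  have hlow : √(1 - ε) ≤ √t := Real.sqrt_le_sqrt ht.1
  have hup : √t ≤ √(1 + ε) := Real.sqrt_le_sqrt ht.2
  -- concavity of `√`
  have hconc : √(1 + ε) + √(1 - ε) ≤ 2 := by
    nlinarith [Real.sq_sqrt (show 0 ≤ 1 + ε by linarith [ht.1, ht.2]),
      Real.sq_sqrt (show 0 ≤ 1 - ε by linarith), sq_nonneg (√(1 + ε) - √(1 - ε))]
  rw [abs_le]
  constructor <;> linarith

lemma one_sub_rpow_neg_half_mul_mul {t : ℝ} (ht : 0 < t) :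
    (1 - t ^ (-(1/2 : ℝ))) * t * (1 - t ^ (-(1/2 : ℝ))) = (√t - 1) * (√t - 1) := by
  have hsqrt : 0 < √t := Real.sqrt_pos.mpr ht
  rw [Real.rpow_neg ht.le, ← Real.sqrt_eq_rpow]
  field_simp
  nlinarith [Real.sq_sqrt ht.le]

lemma one_sub_cfc_rpow_neg_half_mul_mul {A : Type*} [Ring A] [StarRing A] [Algebra ℝ A]
    [TopologicalSpace A] [ContinuousFunctionalCalculus ℝ A IsSelfAdjoint] {a : A}
    (ha : IsSelfAdjoint a) (hpos : ∀ t ∈ spectrum ℝ a, 0 < t) :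
    (1 - cfc (fun t : ℝ => t ^ (-(1/2 : ℝ))) a) * a * (1 - cfc (fun t : ℝ => t ^ (-(1/2 : ℝ))) a)
      = cfc (fun t => √t - 1) a * cfc (fun t => √t - 1) a := by
  have hcont : ContinuousOn (fun t : ℝ => t ^ (-(1/2 : ℝ))) (spectrum ℝ a) := fun t ht =>
    (Real.continuousAt_rpow_const t _ (.inl (hpos t ht).ne')).continuousWithinAt
  rw [← cfc_const_one ℝ a, ← cfc_sub (fun _ => 1) _ a continuousOn_const hcont]
  nth_rw 2 [← cfc_id' ℝ a]
  rw [← cfc_mul _ _ a, ← cfc_mul _ _ a, ← cfc_mul _ _ a]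
  exact cfc_congr fun t ht => one_sub_rpow_neg_half_mul_mul (hpos t ht)

section Operators

variable {H : Type*} [NormedAddCommGroup H] [InnerProductSpace ℂ H]

lemma re_inner_algebraMap_apply_self (c : ℝ) (x : H) :
    re ⟪algebraMap ℝ (H →L[ℂ] H) c x, x⟫_ℂ = c * ‖x‖ ^ 2 := by
  rw [Algebra.algebraMap_eq_smul_one, smul_apply, one_apply_eq_self,
    real_smul_eq_coe_smul (K := ℂ), inner_smul_left, conj_ofReal, re_ofReal_mul,
    inner_self_eq_norm_sq]

variable [CompleteSpace H]

lemma algebraMap_le_of_mul_norm_sq_le_re_inner {T : H →L[ℂ] H} (hT : IsSelfAdjoint T) {c : ℝ}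
    (h : ∀ x, c * ‖x‖ ^ 2 ≤ re ⟪T x, x⟫_ℂ) : algebraMap ℝ (H →L[ℂ] H) c ≤ T := by
  refine isPositive_def'.mpr ⟨hT.sub (.algebraMap _ (.all c)), fun x => ?_⟩
  rw [reApplyInnerSelf_apply, sub_apply, inner_sub_left, map_sub, re_inner_algebraMap_apply_self]
  linarith [h x]

lemma le_algebraMap_of_re_inner_le_mul_norm_sq {T : H →L[ℂ] H} (hT : IsSelfAdjoint T) {c : ℝ}
    (h : ∀ x, re ⟪T x, x⟫_ℂ ≤ c * ‖x‖ ^ 2) : T ≤ algebraMap ℝ (H →L[ℂ] H) c := by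
  refine isPositive_def'.mpr ⟨(IsSelfAdjoint.algebraMap _ (.all c)).sub hT, fun x => ?_⟩
  rw [reApplyInnerSelf_apply, sub_apply, inner_sub_left, map_sub, re_inner_algebraMap_apply_self]
  linarith [h x]

lemma spectrum_subset_Icc_of_re_inner_bounds {T : H →L[ℂ] H} (hT : IsSelfAdjoint T) {a b : ℝ}
    (ha : ∀ x, a * ‖x‖ ^ 2 ≤ re ⟪T x, x⟫_ℂ) (hb : ∀ x, re ⟪T x, x⟫_ℂ ≤ b * ‖x‖ ^ 2) :
    spectrum ℝ T ⊆ Set.Icc a b := fun t ht =>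
  ⟨(algebraMap_le_iff_le_spectrum hT).mp (algebraMap_le_of_mul_norm_sq_le_re_inner hT ha) t ht,
    (le_algebraMap_iff_spectrum_le hT).mp (le_algebraMap_of_re_inner_le_mul_norm_sq hT hb) t ht⟩

lemma re_inner_apply_conj_eq_norm_sq {E S D : H →L[ℂ] H} (hE : IsSelfAdjoint E)
    (hD : IsSelfAdjoint D) (h : E * S * E = D * D) (x : H) :
    re ⟪S (E x), E x⟫_ℂ = ‖D x‖ ^ 2 := by
  have hE' : ⟪E (S (E x)), x⟫_ℂ = ⟪S (E x), E x⟫_ℂ := hE.isSymmetric _ _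
  have hD' : ⟪D (D x), x⟫_ℂ = ⟪D x, D x⟫_ℂ := hD.isSymmetric _ _
  have hx : E (S (E x)) = D (D x) := DFunLike.congr_fun h x
  rw [← hE', hx, hD', inner_self_eq_norm_sq]

end Operators

section GFrame

variable {H K I : Type*} [NormedAddCommGroup H] [InnerProductSpace ℂ H] [CompleteSpace H]
  [NormedAddCommGroup K] [InnerProductSpace ℂ K] [CompleteSpace K]

def IsGFrameOperator (Λ : I → (H →L[ℂ] K)) (S : H →L[ℂ] H) : Prop :=
  ∀ x, HasSum (fun i => (Λ i).adjoint (Λ i x)) (S x)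

namespace IsGFrameOperator

variable {Λ : I → (H →L[ℂ] K)} {S : H →L[ℂ] H}

lemma hasSum_inner (hS : IsGFrameOperator Λ S) (x y : H) :
    HasSum (fun i => ⟪Λ i x, Λ i y⟫_ℂ) ⟪x, S y⟫_ℂ := by
  simpa only [innerSL_apply_apply, adjoint_inner_right] using (hS y).mapL (innerSL ℂ x)

lemma isSelfAdjoint (hS : IsGFrameOperator Λ S) : IsSelfAdjoint S := by
  refine isSelfAdjoint_iff_isSymmetric.mpr fun x y => ?_
  have hconj := (hS.hasSum_inner y x).star
  simp only [star_def, inner_conj_symm] at hconj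
  exact hconj.unique (hS.hasSum_inner x y)

lemma hasSum_norm_sq (hS : IsGFrameOperator Λ S) (x : H) :
    HasSum (fun i => ‖Λ i x‖ ^ 2) (re ⟪S x, x⟫_ℂ) := by
  rw [inner_re_symm]
  simpa only [inner_self_eq_norm_sq] using RCLike.hasSum_re ℂ (hS.hasSum_inner x x)

end IsGFrameOperator

end GFrame

section HilbertSchmidt

variable {H K : Type*} [NormedAddCommGroup H] [InnerProductSpace ℂ H] [FiniteDimensional ℂ H]
  [NormedAddCommGroup K] [InnerProductSpace ℂ K]

lemma hsNormSq_le_finrank_mul_opNorm_sq (T : H →L[ℂ] K) :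
    hsNormSq T ≤ Module.finrank ℂ H * ‖T‖ ^ 2 := by
  calc hsNormSq T ≤ ∑ _k : Fin (Module.finrank ℂ H), ‖T‖ ^ 2 := by
        refine Finset.sum_le_sum fun k _ => pow_le_pow_left₀ (norm_nonneg _) ?_ 2
        simpa using T.le_opNorm (stdOrthonormalBasis ℂ H k)
    _ = Module.finrank ℂ H * ‖T‖ ^ 2 := by simp

lemma tsum_hsNormSq {I : Type*} (Λ : I → (H →L[ℂ] K))
    (hsum : ∀ x, Summable fun i => ‖Λ i x‖ ^ 2) :
    ∑' i, hsNormSq (Λ i) = ∑ k, ∑' i, ‖Λ i (stdOrthonormalBasis ℂ H k)‖ ^ 2 :=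
  Summable.tsum_finsetSum fun _ _ => hsum _

end HilbertSchmidt

theorem nearly_parseval_gframe_dist_le_general
    {H K : Type*} [NormedAddCommGroup H] [InnerProductSpace ℂ H] [FiniteDimensional ℂ H]
    [NormedAddCommGroup K] [InnerProductSpace ℂ K] [CompleteSpace K]
    {I : Type*} (Λ : I → (H →L[ℂ] K)) (S : H →L[ℂ] H)
    (ε : ℝ) (hε0 : 0 ≤ ε) (hε1 : ε < 1)
    (hlow : ∀ x : H, (1 - ε) * ‖x‖ ^ 2 ≤ ∑' i, ‖Λ i x‖ ^ 2)
    (hup : ∀ x : H, ∑' i, ‖Λ i x‖ ^ 2 ≤ (1 + ε) * ‖x‖ ^ 2)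
    (hS : ∀ x : H, HasSum (fun i => (Λ i).adjoint (Λ i x)) (S x)) :
    ∑' i, hsNormSq (Λ i - (Λ i) ∘L cfc (fun t : ℝ => t ^ (-(1/2 : ℝ))) S)
      ≤ (Module.finrank ℂ H : ℝ) * (1 - Real.sqrt (1 - ε)) ^ 2 := by
  have hS : IsGFrameOperator Λ S := hS
  have hframe := hS.hasSum_norm_sq
  have hspec : spectrum ℝ S ⊆ Set.Icc (1 - ε) (1 + ε) :=
    spectrum_subset_Icc_of_re_inner_bounds hS.isSelfAdjoint
      (fun x => (hframe x).tsum_eq ▸ hlow x) (fun x => (hframe x).tsum_eq ▸ hup x)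
  set E := 1 - cfc (fun t : ℝ => t ^ (-(1/2 : ℝ))) S
  set D := cfc (fun t => √t - 1) S
  have hESE : E * S * E = D * D :=
    one_sub_cfc_rpow_neg_half_mul_mul hS.isSelfAdjoint fun t ht => by linarith [(hspec ht).1]
  have hD : ‖D‖ ≤ 1 - √(1 - ε) :=
    norm_cfc_le (sub_nonneg.mpr (Real.sqrt_le_one.mpr (by linarith)))
      fun t ht => abs_sqrt_sub_one_le hε1.le (hspec ht)
  calc ∑' i, hsNormSq (Λ i - (Λ i) ∘L cfc (fun t : ℝ => t ^ (-(1/2 : ℝ))) S)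
      = ∑' i, hsNormSq ((Λ i) ∘L E) := by simp only [E, comp_sub, one_def, comp_id]
    _ = ∑ k, ∑' i, ‖Λ i (E (stdOrthonormalBasis ℂ H k))‖ ^ 2 :=
        tsum_hsNormSq _ fun x => (hframe (E x)).summable
    _ = hsNormSq D := Finset.sum_congr rfl fun _ _ => by
        rw [(hframe _).tsum_eq,
          re_inner_apply_conj_eq_norm_sq (.sub (.one _) (cfc_predicate _ _)) (cfc_predicate _ _) hESE]
    _ ≤ Module.finrank ℂ H * ‖D‖ ^ 2 := hsNormSq_le_finrank_mul_opNorm_sq D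
    _ ≤ Module.finrank ℂ H * (1 - √(1 - ε)) ^ 2 := by gcongr

/-- An ε-nearly Parseval g-frame `{Λ i}` on an `n`-dimensional Hilbert space with
frame operator `S` satisfies `∑ i ‖Λ i − Λ i S^{-1/2}‖_F² ≤ n (1 − √(1−ε))²`. -/
theorem nearly_parseval_gframe_dist_le
    {H K : Type*} [NormedAddCommGroup H] [InnerProductSpace ℂ H] [FiniteDimensional ℂ H]
    [NormedAddCommGroup K] [InnerProductSpace ℂ K] [CompleteSpace K]
    {I : Type*} (Λ : I → (H →L[ℂ] K)) (S : H →L[ℂ] H)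
    (ε : ℝ) (hε0 : 0 ≤ ε) (hε1 : ε < 1)
    (hsum : ∀ x : H, Summable fun i => ‖Λ i x‖ ^ 2)
    (hlow : ∀ x : H, (1 - ε) * ‖x‖ ^ 2 ≤ ∑' i, ‖Λ i x‖ ^ 2)
    (hup : ∀ x : H, ∑' i, ‖Λ i x‖ ^ 2 ≤ (1 + ε) * ‖x‖ ^ 2)
    (hS : ∀ x : H, HasSum (fun i => (Λ i).adjoint (Λ i x)) (S x)) :
    ∑' i, hsNormSq (Λ i - (Λ i) ∘L cfc (fun t : ℝ => t ^ (-(1/2 : ℝ))) S)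
      ≤ (Module.finrank ℂ H : ℝ) * (1 - Real.sqrt (1 - ε)) ^ 2 :=
  nearly_parseval_gframe_dist_le_general Λ S ε hε0 hε1 hlow hup hS
end

section
/- Let H be a finite-dimensional Hilbert space, {Λ_i} a g-frame for H with g-frame operator S, and {Γ_i} an alternate dual g-frame of {Λ_i}. Then ∑_i ‖Λ_i − Γ_i‖_F² = ∑_i ‖Λ_i − Λ_i S^{-1}‖_F² + ∑_i ‖Λ_i S^{-1} − Γ_i‖_F². -/
open ContinuousLinearMap

theorem summable_norm_sub_sq {E ι : Type*} [SeminormedAddCommGroup E] {f g : ι → E}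
    (hf : Summable fun i => ‖f i‖ ^ 2) (hg : Summable fun i => ‖g i‖ ^ 2) :
    Summable fun i => ‖f i - g i‖ ^ 2 := by
  refine .of_nonneg_of_le (fun i => sq_nonneg _) (fun i => ?_) ((hf.add hg).mul_left 2)
  calc ‖f i - g i‖ ^ 2 ≤ (‖f i‖ + ‖g i‖) ^ 2 := by gcongr; exact norm_sub_le _ _
    _ ≤ 2 * (‖f i‖ ^ 2 + ‖g i‖ ^ 2) := add_sq_le

theorem hasSum_norm_add_sq_of_hasSum_inner_eq_zero {𝕜 E ι : Type*} [RCLike 𝕜]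
    [NormedAddCommGroup E] [InnerProductSpace 𝕜 E] {f g : ι → E}
    (hf : Summable fun i => ‖f i‖ ^ 2) (hg : Summable fun i => ‖g i‖ ^ 2)
    (hfg : HasSum (fun i => inner 𝕜 (f i) (g i)) 0) :
    HasSum (fun i => ‖f i + g i‖ ^ 2) ((∑' i, ‖f i‖ ^ 2) + ∑' i, ‖g i‖ ^ 2) := by
  have h := (hf.hasSum.add hg.hasSum).add ((hfg.mapL (RCLike.reCLM (K := 𝕜))).mul_left 2)
  simp only [RCLike.reCLM_apply, map_zero, mul_zero, add_zero] at h
  simpa only [@norm_add_sq 𝕜, add_right_comm] using h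

section HilbertSchmidt

variable {H K I : Type*} [NormedAddCommGroup H] [InnerProductSpace ℂ H] [FiniteDimensional ℂ H]
  [NormedAddCommGroup K] [InnerProductSpace ℂ K]

theorem hasSum_hsNormSq {T : I → H →L[ℂ] K} (hT : ∀ x, Summable fun i => ‖T i x‖ ^ 2) :
    HasSum (fun i => hsNormSq (T i))
      (∑ k, ∑' i, ‖T i (stdOrthonormalBasis ℂ H k)‖ ^ 2) :=
  hasSum_sum fun _ _ => (hT _).hasSum

theorem tsum_hsNormSq_add_of_hasSum_inner_eq_zero {T U : I → H →L[ℂ] K}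
    (hT : ∀ x, Summable fun i => ‖T i x‖ ^ 2) (hU : ∀ x, Summable fun i => ‖U i x‖ ^ 2)
    (hTU : ∀ x, HasSum (fun i => inner ℂ (T i x) (U i x)) 0) :
    ∑' i, hsNormSq (T i + U i) = (∑' i, hsNormSq (T i)) + ∑' i, hsNormSq (U i) := by
  have hTU_sq : HasSum (fun i => hsNormSq (T i + U i))
      (∑ k, ∑' i, ‖T i (stdOrthonormalBasis ℂ H k)‖ ^ 2
        + ∑ k, ∑' i, ‖U i (stdOrthonormalBasis ℂ H k)‖ ^ 2) := by
    rw [← Finset.sum_add_distrib]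
    exact hasSum_sum fun _ _ =>
      hasSum_norm_add_sq_of_hasSum_inner_eq_zero (hT _) (hU _) (hTU _)
  rw [hTU_sq.tsum_eq, (hasSum_hsNormSq hT).tsum_eq, (hasSum_hsNormSq hU).tsum_eq]

end HilbertSchmidt

theorem hasSum_inner_apply_of_hasSum_adjoint_s11 {H K I : Type*} [NormedAddCommGroup H]
    [InnerProductSpace ℂ H] [CompleteSpace H] [NormedAddCommGroup K] [InnerProductSpace ℂ K]
    [CompleteSpace K] {Λ Γ : I → H →L[ℂ] K} {x y : H}
    (h : HasSum (fun i => (Λ i).adjoint (Γ i x)) y) (u : H) :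
    HasSum (fun i => inner ℂ (Λ i u) (Γ i x)) (inner ℂ u y) := by
  simpa only [innerSL_apply_apply, adjoint_inner_right] using h.mapL (innerSL ℂ u)

theorem gframe_alternate_dual_hs_identity_general
    {H K : Type*} [NormedAddCommGroup H] [InnerProductSpace ℂ H] [FiniteDimensional ℂ H]
    [NormedAddCommGroup K] [InnerProductSpace ℂ K] [CompleteSpace K]
    {I : Type*} (Λ Γ : I → (H →L[ℂ] K)) (S Sinv : H →L[ℂ] H)
    (hΛsum : ∀ x : H, Summable fun i => ‖Λ i x‖ ^ 2)
    (hΓsum : ∀ x : H, Summable fun i => ‖Γ i x‖ ^ 2)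
    (hS : ∀ x : H, HasSum (fun i => (Λ i).adjoint (Λ i x)) (S x))
    (hSinv₁ : ∀ x : H, S (Sinv x) = x)
    (hdual : ∀ x : H, HasSum (fun i => (Λ i).adjoint (Γ i x)) x) :
    ∑' i, hsNormSq (Λ i - Γ i)
      = (∑' i, hsNormSq (Λ i - (Λ i) ∘L Sinv)) + ∑' i, hsNormSq ((Λ i) ∘L Sinv - Γ i) := by
  have hcanonical : ∀ i x, (Λ i - Λ i ∘L Sinv) x = Λ i (x - Sinv x) := fun i x => by
    simp only [sub_apply, comp_apply, map_sub]
  have horth : ∀ u x, HasSum (fun i => inner ℂ (Λ i u) ((Λ i ∘L Sinv - Γ i) x)) 0 := by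
    intro u x
    have h := (hasSum_inner_apply_of_hasSum_adjoint_s11 (hS (Sinv x)) u).sub
      (hasSum_inner_apply_of_hasSum_adjoint_s11 (hdual x) u)
    simpa only [hSinv₁, sub_self, ← inner_sub_right, sub_apply, comp_apply] using h
  have hsplit : ∀ i, Λ i - Γ i = (Λ i - Λ i ∘L Sinv) + (Λ i ∘L Sinv - Γ i) := fun i =>
    (sub_add_sub_cancel _ _ _).symm
  simp only [hsplit]
  refine tsum_hsNormSq_add_of_hasSum_inner_eq_zero (fun x => ?_) (fun x => ?_) (fun x => ?_)
  · simpa only [hcanonical] using hΛsum (x - Sinv x)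
  · exact summable_norm_sub_sq (hΛsum (Sinv x)) (hΓsum x)
  · simpa only [hcanonical] using horth (x - Sinv x) x

/-- For a g-frame `{Λ i}` on a finite-dimensional Hilbert space with frame operator
`S` and an alternate dual g-frame `{Γ i}`:
`∑ i ‖Λ i − Γ i‖_F² = ∑ i ‖Λ i − Λ i S⁻¹‖_F² + ∑ i ‖Λ i S⁻¹ − Γ i‖_F²`. -/
theorem gframe_alternate_dual_hs_identity
    {H K : Type*} [NormedAddCommGroup H] [InnerProductSpace ℂ H] [FiniteDimensional ℂ H]
    [NormedAddCommGroup K] [InnerProductSpace ℂ K] [CompleteSpace K]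
    {I : Type*} (Λ Γ : I → (H →L[ℂ] K)) (S Sinv : H →L[ℂ] H)
    (A B C D : ℝ) (hA : 0 < A) (hB : 0 < B) (hC : 0 < C) (hD : 0 < D)
    (hΛsum : ∀ x : H, Summable fun i => ‖Λ i x‖ ^ 2)
    (hΛlow : ∀ x : H, A * ‖x‖ ^ 2 ≤ ∑' i, ‖Λ i x‖ ^ 2)
    (hΛup : ∀ x : H, ∑' i, ‖Λ i x‖ ^ 2 ≤ B * ‖x‖ ^ 2)
    (hΓsum : ∀ x : H, Summable fun i => ‖Γ i x‖ ^ 2)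
    (hΓlow : ∀ x : H, C * ‖x‖ ^ 2 ≤ ∑' i, ‖Γ i x‖ ^ 2)
    (hΓup : ∀ x : H, ∑' i, ‖Γ i x‖ ^ 2 ≤ D * ‖x‖ ^ 2)
    (hS : ∀ x : H, HasSum (fun i => (Λ i).adjoint (Λ i x)) (S x))
    (hSinv₁ : ∀ x : H, S (Sinv x) = x) (hSinv₂ : ∀ x : H, Sinv (S x) = x)
    (hdual : ∀ x : H, HasSum (fun i => (Λ i).adjoint (Γ i x)) x) :
    ∑' i, hsNormSq (Λ i - Γ i)
      = (∑' i, hsNormSq (Λ i - (Λ i) ∘L Sinv)) + ∑' i, hsNormSq ((Λ i) ∘L Sinv - Γ i) :=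
  gframe_alternate_dual_hs_identity_general Λ Γ S Sinv hΛsum hΓsum hS hSinv₁ hdual
end
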